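/- For probability mass functions q and r on a finite set, L₁(q,r) ≤ √(2 ln(b) · D(q||r)), where b is the base of the logarithm used in D (Pinsker-type inequality). -/

import Mathlib

/-!
With `klFun x = x log x + 1 - x`, the pointwise inequality `3 (x - 1)² ≤ (2x + 4) klFun x`
(`x ≥ 0`) holds because the difference vanishes at `1` and its derivative
`4 ((x + 1) log x - 2 (x - 1))` is increasing and vanishes at `1` as well. Scaling by `x = q/r`
gives `3 (q - r)² ≤ (2q + 4r) (q log (q/r) + r - q)`; summing with Cauchy–Schwarz, the weights
`(2q + 4r)/3` add up to `2` and the second factors add up to the divergence in base `e`.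
-/

open Real InformationTheory Set

lemma monotoneOn_add_one_mul_log_sub_two_mul :
    MonotoneOn (fun x : ℝ ↦ (x + 1) * log x - 2 * (x - 1)) (Ioi 0) := by
  refine monotoneOn_of_hasDerivWithinAt_nonneg (convex_Ioi 0)
    (f' := fun x ↦ log x - (1 - x⁻¹)) ?_ (fun x hx ↦ ?_) (fun x hx ↦ ?_)
  · exact ContinuousOn.sub (ContinuousOn.mul (by fun_prop)
      (continuousOn_log.mono fun x hx ↦ (ne_of_gt hx))) (by fun_prop)
  · rw [interior_Ioi, mem_Ioi] at hx
    have := (((hasDerivAt_id x).add_const 1).mul (hasDerivAt_log (ne_of_gt hx))).sub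
      (((hasDerivAt_id x).sub_const 1).const_mul 2)
    refine (this.congr_deriv ?_).hasDerivWithinAt
    simp only [id_eq]
    field_simp
    ring
  · rw [interior_Ioi, mem_Ioi] at hx
    exact sub_nonneg.2 (one_sub_inv_le_log_of_pos hx)

lemma hasDerivAt_mul_klFun_sub_three_mul_sq {x : ℝ} (hx : x ≠ 0) :
    HasDerivAt (fun t ↦ (2 * t + 4) * klFun t - 3 * (t - 1) ^ 2)
      (4 * ((x + 1) * log x - 2 * (x - 1))) x := by
  have := ((((hasDerivAt_id x).const_mul 2).add_const 4).mul (hasDerivAt_klFun hx)).sub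
    ((((hasDerivAt_id x).sub_const 1).pow 2).const_mul 3)
  refine this.congr_deriv ?_
  simp only [klFun_apply, id_eq]
  ring

lemma three_mul_sq_sub_one_le_mul_klFun {x : ℝ} (hx : 0 ≤ x) :
    3 * (x - 1) ^ 2 ≤ (2 * x + 4) * klFun x := by
  set F : ℝ → ℝ := fun t ↦ (2 * t + 4) * klFun t - 3 * (t - 1) ^ 2
  have hF : Continuous F := by fun_prop
  have hdiff : ∀ t ∈ Ioi (0 : ℝ), DifferentiableAt ℝ F t := fun t ht ↦
    (hasDerivAt_mul_klFun_sub_three_mul_sq (ne_of_gt ht)).differentiableAt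
  have hmin : IsMinOn F (Ici 0) 1 := by
    refine isMinOn_Ici_of_deriv hF.continuousAt hF.continuousAt
      (fun t ht ↦ (hdiff t ht.1).differentiableWithinAt)
      (fun t ht ↦ (hdiff t (one_pos.trans ht : (0:ℝ) < t)).differentiableWithinAt)
      (fun t ht ↦ ?_) (fun t ht ↦ ?_)
    · rw [(hasDerivAt_mul_klFun_sub_three_mul_sq (ne_of_gt ht.1)).deriv]
      have : (t + 1) * log t - 2 * (t - 1) ≤ 0 := by
        simpa using monotoneOn_add_one_mul_log_sub_two_mul ht.1 (mem_Ioi.2 one_pos) ht.2.le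
      linarith
    · rw [(hasDerivAt_mul_klFun_sub_three_mul_sq (ne_of_gt (one_pos.trans ht))).deriv]
      have : 0 ≤ (t + 1) * log t - 2 * (t - 1) := by
        simpa using monotoneOn_add_one_mul_log_sub_two_mul (mem_Ioi.2 one_pos)
          (mem_Ioi.2 (one_pos.trans ht)) ht.le
      linarith
  have hF1 : F 1 = 0 := by simp [F, klFun_one]
  exact sub_nonneg.1 (hF1 ▸ isMinOn_iff.1 hmin x hx)

lemma mul_klFun_div {q r : ℝ} (hr : r ≠ 0) :
    r * klFun (q / r) = q * log (q / r) + r - q := by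
  rw [klFun_apply]
  field_simp

lemma mul_log_div_add_sub_nonneg {q r : ℝ} (hq : 0 ≤ q) (hr : 0 ≤ r) (hqr : r = 0 → q = 0) :
    0 ≤ q * log (q / r) + r - q := by
  rcases hr.eq_or_lt with rfl | hr
  · simp [hqr rfl]
  · rw [← mul_klFun_div hr.ne']
    exact mul_nonneg hr.le (klFun_nonneg (div_nonneg hq hr.le))

lemma three_mul_sq_sub_le_mul {q r : ℝ} (hq : 0 ≤ q) (hr : 0 ≤ r) (hqr : r = 0 → q = 0) :
    3 * (q - r) ^ 2 ≤ (2 * q + 4 * r) * (q * log (q / r) + r - q) := by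
  rcases hr.eq_or_lt with rfl | hr
  · simp [hqr rfl]
  · have hx := three_mul_sq_sub_one_le_mul_klFun (div_nonneg hq hr.le)
    rw [← mul_klFun_div hr.ne']
    calc 3 * (q - r) ^ 2 = r ^ 2 * (3 * (q / r - 1) ^ 2) := by field_simp
      _ ≤ r ^ 2 * ((2 * (q / r) + 4) * klFun (q / r)) := by gcongr
      _ = (2 * q + 4 * r) * (r * klFun (q / r)) := by field_simp

theorem sum_abs_sub_le_sqrt_two_mul_sum_mul_log {ι : Type*} [Fintype ι] (q r : ι → ℝ)
    (hq0 : ∀ i, 0 ≤ q i) (hr0 : ∀ i, 0 ≤ r i) (hq1 : ∑ i, q i = 1) (hr1 : ∑ i, r i = 1)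
    (hqr : ∀ i, r i = 0 → q i = 0) :
    ∑ i, |q i - r i| ≤ √(2 * ∑ i, q i * log (q i / r i)) := by
  set A : ι → ℝ := fun i ↦ (2 * q i + 4 * r i) / 3
  set B : ι → ℝ := fun i ↦ q i * log (q i / r i) + r i - q i
  have hA0 i : 0 ≤ A i := by have := hq0 i; have := hr0 i; positivity
  have hB0 i : 0 ≤ B i := mul_log_div_add_sub_nonneg (hq0 i) (hr0 i) (hqr i)
  have hA : ∑ i, A i = 2 := by
    simp only [A, ← Finset.sum_div, Finset.sum_add_distrib, ← Finset.mul_sum, hq1, hr1]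
    norm_num
  have hB : ∑ i, B i = ∑ i, q i * log (q i / r i) := by
    simp only [B, Finset.sum_sub_distrib, Finset.sum_add_distrib, hq1, hr1]
    ring
  have hpt i : |q i - r i| ≤ √(A i) * √(B i) := by
    rw [← sqrt_mul (hA0 i), ← sqrt_sq_eq_abs]
    refine sqrt_le_sqrt ?_
    have := three_mul_sq_sub_le_mul (hq0 i) (hr0 i) (hqr i)
    simp only [A, B]
    linarith
  calc ∑ i, |q i - r i| ≤ ∑ i, √(A i) * √(B i) := Finset.sum_le_sum fun i _ ↦ hpt i
    _ ≤ √(∑ i, A i) * √(∑ i, B i) := sum_sqrt_mul_sqrt_le _ hA0 hB0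
    _ = √(2 * ∑ i, q i * log (q i / r i)) := by rw [hA, hB, sqrt_mul zero_le_two]

/-- Pinsker-type inequality: `L₁(q,r) ≤ √(2 ln b · D(q‖r))`, where `D` is the KL
divergence in base `b` (absolute continuity encodes the `q log(q/0) = ∞` convention,
under which the claim is trivial). -/
theorem l1_le_sqrt_kl {Y : Type*} [Fintype Y] (b : ℝ) (hb : 1 < b)
    (q r : Y → ℝ) (hq0 : ∀ y, 0 ≤ q y) (hr0 : ∀ y, 0 ≤ r y)
    (hq1 : ∑ y, q y = 1) (hr1 : ∑ y, r y = 1)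
    (hac : ∀ y, r y = 0 → q y = 0) :
    ∑ y, |q y - r y| ≤
      Real.sqrt (2 * Real.log b * ∑ y, q y * Real.logb b (q y / r y)) := by
  have hlogb : Real.log b ≠ 0 := (Real.log_pos hb).ne'
  have hD : Real.log b * ∑ y, q y * Real.logb b (q y / r y) = ∑ y, q y * log (q y / r y) := by
    simp only [Real.logb, Finset.mul_sum]
    exact Finset.sum_congr rfl fun y _ ↦ by field_simp
  rw [mul_assoc, hD]
  exact sum_abs_sub_le_sqrt_two_mul_sum_mul_log q r hq0 hr0 hq1 hr1 hac
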